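/- Suppose T, A ∈ ℝ^{p×n} satisfy ‖T − A‖∞ ≤ λ·n^{−1/2} for some λ ≥ 0. Suppose v ∈ ℝ^p and w ∈ ℝ^n are unit vectors with at most k nonzero coordinates of v, such that v and w are respectively the leading left and right singular vectors of A (i.e., Aw = σ₁v and Aᵀv = σ₁w where σ₁ is the largest singular value of A), and let δ > 0 be the difference between the first and second singular values of A. Let (v̂, ŵ) be any maximizer over pairs of unit vectors (ṽ,w̃) ∈ S^{p−1} × S^{n−1} of ⟨T, ṽw̃ᵀ⟩ − λ‖ṽ‖₁. Then sin ∠(v̂, v) ≤ 4λ√k/δ. -/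

import Mathlib

/-!
Write `Δ = v wᵀ - v̂ ŵᵀ`. Because `v, w` are leading singular vectors with gap `δ`, the linear
form `⟨A, ·⟩` is curved at `v wᵀ`: `⟨A, Δ⟩ ≥ (δ / 2) ‖Δ‖_F²`. Indeed, with `d = ⟨v̂, v⟩`,
`e = ⟨ŵ, w⟩`, `r = v̂ - d v` and `ρ = ŵ - e w ⊥ w`, one has `v̂ᵀ A ŵ = σ₁ d e + rᵀ A ρ` and
`|rᵀ A ρ| ≤ σ₂ ‖r‖ ‖ρ‖ ≤ σ₂ (1 - d e)`, while `‖Δ‖_F² = 2 (1 - d e)`.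

On the other side, comparing the objective at `(v̂, ŵ)` and `(v, w)` bounds `⟨A, Δ⟩` by
`⟨T - A, v̂ ŵᵀ - v wᵀ⟩ + λ (‖v‖₁ - ‖v̂‖₁)`. The entrywise bound `λ / √n` on `T - A` gives
`|⟨T - A, M⟩| ≤ λ Σⱼ ‖Mⱼ‖₂` (`Mⱼ` the rows of `M`), and `‖x‖₁ = Σⱼ ‖(x yᵀ)ⱼ‖₂`
for a unit vector `y`. Since `v wᵀ` lives on the at most `k` rows of the support of `v`, the usual
decomposability argument for this row norm bounds everything by
`2 λ Σ_{j ∈ supp v} ‖Δⱼ‖₂ ≤ 2 λ √k ‖Δ‖_F`. Hence `‖Δ‖_F ≤ 4 λ √k / δ`, and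
`sin ∠(v̂, v) = √(1 - d²) ≤ ‖Δ‖_F`.
-/

open MeasureTheory ProbabilityTheory

noncomputable section

namespace MissInspect

/-- Euclidean (ℓ²) norm of a finite-dimensional real vector. -/
def l2norm {d : ℕ} (v : Fin d → ℝ) : ℝ := Real.sqrt (∑ i, (v i) ^ 2)

/-- ℓ¹ norm. -/
def l1norm {d : ℕ} (v : Fin d → ℝ) : ℝ := ∑ i, |v i|

/-- ℓ∞ norm. -/
def linfNorm {d : ℕ} (v : Fin d → ℝ) : ℝ := ⨆ i, |v i|

/-- Euclidean inner product. -/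
def dotp {d : ℕ} (u v : Fin d → ℝ) : ℝ := ∑ i, u i * v i

/-- Acute angle between two vectors. -/
def angle {d : ℕ} (u v : Fin d → ℝ) : ℝ :=
  Real.arccos (|dotp u v| / (l2norm u * l2norm v))

/-- Entrywise (Hadamard) product of two `p × n` arrays. -/
def hadamard {p n : ℕ} (A B : Fin p → Fin n → ℝ) : Fin p → Fin n → ℝ :=
  fun j t => A j t * B j t

/-- Frobenius norm. -/
def frobNorm {p n : ℕ} (A : Fin p → Fin n → ℝ) : ℝ :=
  Real.sqrt (∑ j, ∑ t, (A j t) ^ 2)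

/-- Number of nonzero coordinates. -/
def suppCard {d : ℕ} (v : Fin d → ℝ) : ℕ :=
  (Finset.univ.filter fun i => v i ≠ 0).card

/-- `L_{j,t}`: number of observations among the first `t` time points in row `j`. -/
def Lcount {p n : ℕ} (Om : Fin p → Fin n → ℝ) (j : Fin p) (t : ℕ) : ℝ :=
  ∑ r : Fin n, if (r : ℕ) < t then Om j r else 0

/-- `R_{j,t}`: number of observations among the last `t` time points in row `j`. -/
def Rcount {p n : ℕ} (Om : Fin p → Fin n → ℝ) (j : Fin p) (t : ℕ) : ℝ :=
  ∑ r : Fin n, if n - t ≤ (r : ℕ) then Om j r else 0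

/-- The MissCUSUM transformation.  The column index `t : Fin (n-1)` corresponds to the
paper's (1-based) time index `t+1`. -/
def missCUSUM {p n : ℕ} (M Om : Fin p → Fin n → ℝ) : Fin p → Fin (n - 1) → ℝ :=
  fun j t =>
    if 0 < Lcount Om j ((t : ℕ) + 1) ∧ 0 < Rcount Om j (n - ((t : ℕ) + 1)) then
      Real.sqrt (Lcount Om j ((t : ℕ) + 1) * Rcount Om j (n - ((t : ℕ) + 1)) /
          Lcount Om j n) *
        ((1 / Rcount Om j (n - ((t : ℕ) + 1))) *
            (∑ r : Fin n, if (t : ℕ) + 1 ≤ (r : ℕ) then M j r * Om j r else 0) -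
          (1 / Lcount Om j ((t : ℕ) + 1)) *
            (∑ r : Fin n, if (r : ℕ) < (t : ℕ) + 1 then M j r * Om j r else 0))
    else 0

/-- The ordinary CUSUM transformation: MissCUSUM with everything observed. -/
def cusum {p n : ℕ} (M : Fin p → Fin n → ℝ) : Fin p → Fin (n - 1) → ℝ :=
  missCUSUM M fun _ _ => 1

/-- `τ = n⁻¹ min(z, n−z)`. -/
def tau (n z : ℕ) : ℝ := ((min z (n - z) : ℕ) : ℝ) / (n : ℝ)

/-- The weighted norm `‖θ‖_{2,q}`. -/
def norm2q {p : ℕ} (θ q : Fin p → ℝ) : ℝ := Real.sqrt (∑ j, (θ j) ^ 2 * q j)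

/-- The mean matrix with a single changepoint at (1-based) location `z`. -/
def meanMat {p : ℕ} (n z : ℕ) (μ1 θ : Fin p → ℝ) : Fin p → Fin n → ℝ :=
  fun j t => if (t : ℕ) < z then μ1 j else μ1 j + θ j

/-- A real random variable is Bernoulli(q): {0,1}-valued with success probability `q`. -/
def IsBernoulli {Ω₀ : Type} [MeasurableSpace Ω₀] (P : Measure Ω₀) (Y : Ω₀ → ℝ) (q : ℝ) :
    Prop :=
  Measurable Y ∧ (∀ ω, Y ω = 0 ∨ Y ω = 1) ∧ P {ω | Y ω = 1} = ENNReal.ofReal q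

/-- `(X, Ω) ~ P_{n,p,z,θ,σ,q}`: the single-changepoint Gaussian data matrix with
row-homogeneous Bernoulli missingness, all entries of `X` and `Ω` jointly independent. -/
def IsModel {Ω₀ : Type} [MeasurableSpace Ω₀] (P : Measure Ω₀) {p : ℕ} (n z : ℕ)
    (μ1 θ : Fin p → ℝ) (σ : ℝ) (q : Fin p → ℝ) (X Om : Ω₀ → Fin p → Fin n → ℝ) : Prop :=
  (∀ j t, Measurable fun ω => X ω j t) ∧
  (∀ j t, Measure.map (fun ω => X ω j t) P =
      gaussianReal (meanMat n z μ1 θ j t) (Real.toNNReal (σ ^ 2))) ∧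
  (∀ j t, IsBernoulli P (fun ω => Om ω j t) (q j)) ∧
  iIndepFun
    (fun (i : Fin p × Fin n ⊕ Fin p × Fin n) ω =>
      Sum.elim (fun jt => X ω jt.1 jt.2) (fun jt => Om ω jt.1 jt.2) i) P

/-- The objective function `⟨T, v wᵀ⟩ − λ‖v‖₁`. -/
def objective {p m : ℕ} (T : Fin p → Fin m → ℝ) (lam : ℝ) (v : Fin p → ℝ)
    (w : Fin m → ℝ) : ℝ :=
  (∑ j, ∑ t, T j t * (v j * w t)) - lam * l1norm v

/-- `(v, w)` maximises the objective over the product of closed unit Euclidean balls. -/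
def IsMaxOnBalls {p m : ℕ} (T : Fin p → Fin m → ℝ) (lam : ℝ) (v : Fin p → ℝ)
    (w : Fin m → ℝ) : Prop :=
  l2norm v ≤ 1 ∧ l2norm w ≤ 1 ∧
    ∀ (v' : Fin p → ℝ) (w' : Fin m → ℝ), l2norm v' ≤ 1 → l2norm w' ≤ 1 →
      objective T lam v' w' ≤ objective T lam v w

/-- The submatrix of odd-numbered (1-based) columns. -/
def oddCols {p n : ℕ} (M : Fin p → Fin n → ℝ) : Fin p → Fin (n / 2) → ℝ :=
  fun j t => M j ⟨2 * (t : ℕ), by have := t.isLt; omega⟩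

/-- The submatrix of even-numbered (1-based) columns. -/
def evenCols {p n : ℕ} (M : Fin p → Fin n → ℝ) : Fin p → Fin (n / 2) → ℝ :=
  fun j t => M j ⟨2 * (t : ℕ) + 1, by have := t.isLt; omega⟩

end MissInspect

namespace MissInspect

/-- `Mw`, the matrix–vector product. -/
def mulVecF {p n : ℕ} (M : Fin p → Fin n → ℝ) (w : Fin n → ℝ) : Fin p → ℝ :=
  fun j => ∑ t, M j t * w t

open Matrix

section Vectors

variable {d : ℕ}

theorem l2norm_eq_norm (x : Fin d → ℝ) : l2norm x = ‖WithLp.toLp 2 x‖ := by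
  simp [l2norm, EuclideanSpace.norm_eq]

theorem dotp_eq_dotProduct (x y : Fin d → ℝ) : dotp x y = x ⬝ᵥ y := rfl

theorem dotProduct_eq_inner (x y : Fin d → ℝ) :
    x ⬝ᵥ y = inner ℝ (WithLp.toLp 2 x) (WithLp.toLp 2 y) := by
  simp [EuclideanSpace.inner_eq_star_dotProduct, dotProduct_comm]

theorem l2norm_nonneg (x : Fin d → ℝ) : 0 ≤ l2norm x := Real.sqrt_nonneg _

theorem l2norm_sq (x : Fin d → ℝ) : l2norm x ^ 2 = x ⬝ᵥ x := by
  rw [l2norm_eq_norm, dotProduct_eq_inner, real_inner_self_eq_norm_sq]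

theorem abs_dotProduct_le (x y : Fin d → ℝ) : |x ⬝ᵥ y| ≤ l2norm x * l2norm y := by
  rw [dotProduct_eq_inner, l2norm_eq_norm, l2norm_eq_norm]
  exact abs_real_inner_le_norm _ _

theorem l2norm_smul (c : ℝ) (x : Fin d → ℝ) : l2norm (c • x) = |c| * l2norm x := by
  rw [l2norm_eq_norm, l2norm_eq_norm, WithLp.toLp_smul, norm_smul, Real.norm_eq_abs]

theorem l2norm_le_l2norm_sub_add (x y : Fin d → ℝ) : l2norm x ≤ l2norm (x - y) + l2norm y := by
  simpa only [l2norm_eq_norm, WithLp.toLp_sub] using norm_le_norm_sub_add _ _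

theorem l2norm_le_of_abs_le {c : ℝ} (hc : 0 ≤ c) {g : Fin d → ℝ}
    (hg : ∀ t, |g t| ≤ c / √d) : l2norm g ≤ c := by
  rcases Nat.eq_zero_or_pos d with rfl | hd
  · simpa [l2norm] using hc
  have hsum : ∑ t, g t ^ 2 ≤ c ^ 2 := calc
    ∑ t, g t ^ 2 ≤ ∑ _t : Fin d, (c / √d) ^ 2 := by
      refine Finset.sum_le_sum fun t _ => ?_
      exact sq_le_sq' (abs_le.mp (hg t)).1 (abs_le.mp (hg t)).2
    _ = c ^ 2 := by
      rw [Finset.sum_const, Finset.card_univ, Fintype.card_fin, nsmul_eq_mul, div_pow,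
        Real.sq_sqrt (Nat.cast_nonneg d)]
      field_simp
  exact Real.sqrt_le_iff.mpr ⟨hc, hsum⟩

end Vectors

section Matrices

variable {p n : ℕ}

def frobInner (M N : Matrix (Fin p) (Fin n) ℝ) : ℝ := ∑ j, M j ⬝ᵥ N j

theorem frobInner_sub_left (M M' N : Matrix (Fin p) (Fin n) ℝ) :
    frobInner (M - M') N = frobInner M N - frobInner M' N := by
  simp only [frobInner, ← Finset.sum_sub_distrib]
  exact Finset.sum_congr rfl fun j _ => sub_dotProduct (M j) (M' j) (N j)

theorem frobInner_sub_right (M N N' : Matrix (Fin p) (Fin n) ℝ) :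
    frobInner M (N - N') = frobInner M N - frobInner M N' := by
  simp only [frobInner, ← Finset.sum_sub_distrib]
  exact Finset.sum_congr rfl fun j _ => dotProduct_sub (M j) (N j) (N' j)

theorem mulVecF_eq_mulVec (A : Matrix (Fin p) (Fin n) ℝ) (u : Fin n → ℝ) :
    mulVecF A u = A *ᵥ u := rfl

theorem frobInner_vecMulVec (M : Matrix (Fin p) (Fin n) ℝ) (x : Fin p → ℝ) (y : Fin n → ℝ) :
    frobInner M (vecMulVec x y) = x ⬝ᵥ M *ᵥ y := by
  simp [frobInner, vecMulVec_apply, dotProduct, mulVec, Finset.mul_sum, mul_left_comm]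

theorem objective_eq (T : Matrix (Fin p) (Fin n) ℝ) (lam : ℝ) (x : Fin p → ℝ) (y : Fin n → ℝ) :
    objective T lam x y = frobInner T (vecMulVec x y) - lam * l1norm x := rfl

theorem frobNorm_nonneg (M : Matrix (Fin p) (Fin n) ℝ) : 0 ≤ frobNorm M := Real.sqrt_nonneg _

theorem frobNorm_sq (M : Matrix (Fin p) (Fin n) ℝ) : frobNorm M ^ 2 = ∑ j, l2norm (M j) ^ 2 := by
  unfold frobNorm
  rw [Real.sq_sqrt (by positivity)]
  simp only [l2norm, Real.sq_sqrt (Finset.sum_nonneg fun _ _ => sq_nonneg _)]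

theorem vecMulVec_row (x : Fin p → ℝ) (y : Fin n → ℝ) (j : Fin p) :
    vecMulVec x y j = x j • y := rfl

theorem frobNorm_vecMulVec_sub_sq {x u : Fin p → ℝ} {y z : Fin n → ℝ}
    (hx : l2norm x = 1) (hy : l2norm y = 1) (hu : l2norm u = 1) (hz : l2norm z = 1) :
    frobNorm (vecMulVec x y - vecMulVec u z) ^ 2 = 2 - 2 * (x ⬝ᵥ u) * (y ⬝ᵥ z) := by
  have hrow (j : Fin p) : l2norm ((vecMulVec x y - vecMulVec u z) j) ^ 2
      = x j * x j - 2 * (x j * u j) * (y ⬝ᵥ z) + u j * u j := by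
    rw [show (vecMulVec x y - vecMulVec u z) j = x j • y - u j • z from rfl, l2norm_sq]
    simp only [dotProduct_sub, sub_dotProduct, dotProduct_smul,
      smul_dotProduct, ← l2norm_sq, hy, hz, dotProduct_comm z y, smul_eq_mul]
    ring
  simp only [frobNorm_sq, hrow, Finset.sum_add_distrib, Finset.sum_sub_distrib, ← Finset.sum_mul,
    ← Finset.mul_sum]
  rw [← dotProduct, ← dotProduct, ← dotProduct, ← l2norm_sq, ← l2norm_sq, hx, hu]
  ring

theorem sum_l2norm_vecMulVec (x : Fin p → ℝ) (y : Fin n → ℝ) :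
    ∑ j, l2norm (vecMulVec x y j) = l1norm x * l2norm y := by
  simp only [vecMulVec_row, l2norm_smul, l1norm, Finset.sum_mul]

theorem abs_frobInner_le_of_abs_le {c : ℝ} (hc : 0 ≤ c) {G : Matrix (Fin p) (Fin n) ℝ}
    (hG : ∀ j t, |G j t| ≤ c / √n) (N : Matrix (Fin p) (Fin n) ℝ) :
    |frobInner G N| ≤ c * ∑ j, l2norm (N j) := by
  rw [frobInner, Finset.mul_sum]
  refine (Finset.abs_sum_le_sum_abs _ _).trans (Finset.sum_le_sum fun j _ => ?_)
  exact (abs_dotProduct_le _ _).trans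
    (mul_le_mul_of_nonneg_right (l2norm_le_of_abs_le hc (hG j)) (l2norm_nonneg _))

theorem sum_l2norm_sub_add_sub_le {X : Matrix (Fin p) (Fin n) ℝ} {S : Finset (Fin p)}
    (hX : ∀ j ∉ S, X j = 0) (Y : Matrix (Fin p) (Fin n) ℝ) :
    ∑ j, l2norm ((X - Y) j) + ∑ j, l2norm (X j) - ∑ j, l2norm (Y j)
      ≤ 2 * ∑ j ∈ S, l2norm ((X - Y) j) := calc
    _ = ∑ j, (l2norm (X j - Y j) + l2norm (X j) - l2norm (Y j)) := by
      rw [Finset.sum_sub_distrib, Finset.sum_add_distrib]; rfl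
    _ ≤ ∑ j, if j ∈ S then 2 * l2norm (X j - Y j) else 0 := by
      refine Finset.sum_le_sum fun j _ => ?_
      split_ifs with hj
      · linarith [l2norm_le_l2norm_sub_add (X j) (Y j)]
      · simp [hX j hj, l2norm]
    _ = _ := by rw [Finset.sum_ite_mem, Finset.univ_inter, Finset.mul_sum]; rfl

theorem sum_l2norm_le_sqrt_card_mul_frobNorm (S : Finset (Fin p)) (M : Matrix (Fin p) (Fin n) ℝ) :
    ∑ j ∈ S, l2norm (M j) ≤ √S.card * frobNorm M := by
  have hsq : (∑ j ∈ S, l2norm (M j)) ^ 2 ≤ (√S.card * frobNorm M) ^ 2 := calc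
    _ ≤ S.card * ∑ j ∈ S, l2norm (M j) ^ 2 := sq_sum_le_card_mul_sum_sq
    _ ≤ S.card * ∑ j, l2norm (M j) ^ 2 := by
      gcongr
      exact Finset.subset_univ S
    _ = _ := by rw [mul_pow, Real.sq_sqrt (Nat.cast_nonneg _), frobNorm_sq]
  exact (pow_le_pow_iff_left₀ (Finset.sum_nonneg fun _ _ => l2norm_nonneg _)
    (mul_nonneg (Real.sqrt_nonneg _) (frobNorm_nonneg M)) two_ne_zero).mp hsq

end Matrices

section SingularVectors

variable {p n : ℕ}

theorem l2norm_mulVec_le_frobNorm_mul (A : Matrix (Fin p) (Fin n) ℝ) (u : Fin n → ℝ) :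
    l2norm (A *ᵥ u) ≤ frobNorm A * l2norm u := by
  have hsq : l2norm (A *ᵥ u) ^ 2 ≤ (frobNorm A * l2norm u) ^ 2 := by
    rw [mul_pow, frobNorm_sq, Finset.sum_mul, l2norm, Real.sq_sqrt (by positivity)]
    refine Finset.sum_le_sum fun j _ => ?_
    rw [← mul_pow, ← sq_abs]
    exact pow_le_pow_left₀ (abs_nonneg _) (abs_dotProduct_le (A j) u) 2
  exact (pow_le_pow_iff_left₀ (l2norm_nonneg _)
    (mul_nonneg (frobNorm_nonneg A) (l2norm_nonneg _)) two_ne_zero).mp hsq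

/-- When `w` is a leading right singular vector of `A`, this is its second singular value. -/
def opNormOnOrthogonal (A : Matrix (Fin p) (Fin n) ℝ) (w : Fin n → ℝ) : ℝ :=
  sSup {x | ∃ u : Fin n → ℝ, l2norm u ≤ 1 ∧ dotp u w = 0 ∧ x = l2norm (mulVecF A u)}

theorem bddAbove_opNormOnOrthogonal_set (A : Matrix (Fin p) (Fin n) ℝ) (w : Fin n → ℝ) :
    BddAbove {x | ∃ u : Fin n → ℝ, l2norm u ≤ 1 ∧ dotp u w = 0 ∧ x = l2norm (mulVecF A u)} := by
  refine ⟨frobNorm A, ?_⟩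
  rintro x ⟨u, hu, -, rfl⟩
  calc l2norm (A *ᵥ u) ≤ frobNorm A * l2norm u := l2norm_mulVec_le_frobNorm_mul A u
    _ ≤ frobNorm A := mul_le_of_le_one_right (frobNorm_nonneg A) hu

theorem l2norm_mulVec_le_opNormOnOrthogonal (A : Matrix (Fin p) (Fin n) ℝ) {w : Fin n → ℝ}
    {ρ : Fin n → ℝ} (hρ : ρ ⬝ᵥ w = 0) :
    l2norm (A *ᵥ ρ) ≤ opNormOnOrthogonal A w * l2norm ρ := by
  rcases (l2norm_nonneg ρ).eq_or_lt with h0 | hpos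
  · simpa [← h0] using l2norm_mulVec_le_frobNorm_mul A ρ
  have hu : l2norm ((l2norm ρ)⁻¹ • ρ) = 1 := by
    rw [l2norm_smul, abs_inv, abs_of_pos hpos, inv_mul_cancel₀ hpos.ne']
  have hmem := le_csSup (bddAbove_opNormOnOrthogonal_set A w)
    ⟨(l2norm ρ)⁻¹ • ρ, hu.le, by
      rw [dotp_eq_dotProduct, smul_dotProduct, hρ, smul_zero], rfl⟩
  rw [mulVecF_eq_mulVec, mulVec_smul, l2norm_smul, abs_inv, abs_of_pos hpos] at hmem
  rw [mul_comm]
  exact (inv_mul_le_iff₀ hpos).mp hmem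

theorem opNormOnOrthogonal_nonneg (A : Matrix (Fin p) (Fin n) ℝ) (w : Fin n → ℝ) :
    0 ≤ opNormOnOrthogonal A w :=
  le_csSup (bddAbove_opNormOnOrthogonal_set A w) ⟨0, by simp [l2norm, dotp, mulVecF]⟩

end SingularVectors

section Curvature

variable {p n : ℕ}

theorem l2norm_sub_smul_sq {d : ℕ} {x y : Fin d → ℝ} (hx : l2norm x = 1) (hy : l2norm y = 1) :
    l2norm (x - (x ⬝ᵥ y) • y) ^ 2 = 1 - (x ⬝ᵥ y) ^ 2 := by
  rw [l2norm_sq]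
  simp only [dotProduct_sub, sub_dotProduct, dotProduct_smul, smul_dotProduct, smul_eq_mul,
    ← l2norm_sq, hx, hy, dotProduct_comm y x]
  ring

theorem abs_dotProduct_le_one {d : ℕ} {x y : Fin d → ℝ} (hx : l2norm x = 1) (hy : l2norm y = 1) :
    |x ⬝ᵥ y| ≤ 1 := by
  simpa [hx, hy] using abs_dotProduct_le x y

/-- Curvature of `⟨A, ·⟩` at its maximiser `v wᵀ` over rank-one matrices of unit vectors. -/
theorem sub_div_two_mul_frobNorm_sq_le_frobInner {A : Matrix (Fin p) (Fin n) ℝ} {σ₁ σ₂ : ℝ}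
    {v u : Fin p → ℝ} {w z : Fin n → ℝ} (hAw : A *ᵥ w = σ₁ • v) (hAtv : Aᵀ *ᵥ v = σ₁ • w)
    (hσ₂ : 0 ≤ σ₂) (hA₂ : ∀ ρ, ρ ⬝ᵥ w = 0 → l2norm (A *ᵥ ρ) ≤ σ₂ * l2norm ρ)
    (hv : l2norm v = 1) (hw : l2norm w = 1) (hu : l2norm u = 1) (hz : l2norm z = 1) :
    (σ₁ - σ₂) / 2 * frobNorm (vecMulVec v w - vecMulVec u z) ^ 2
      ≤ frobInner A (vecMulVec v w - vecMulVec u z) := by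
  set d := u ⬝ᵥ v
  set e := z ⬝ᵥ w
  set r := u - d • v
  set ρ := z - e • w
  have hρw : ρ ⬝ᵥ w = 0 := by
    simp only [ρ, sub_dotProduct, smul_dotProduct, smul_eq_mul, ← l2norm_sq, hw]
    ring
  have hvA (y : Fin n → ℝ) : v ⬝ᵥ A *ᵥ y = σ₁ * (w ⬝ᵥ y) := by
    rw [dotProduct_mulVec, ← mulVec_transpose, hAtv, smul_dotProduct, smul_eq_mul]
  have hAv (x : Fin p → ℝ) : x ⬝ᵥ A *ᵥ w = σ₁ * (x ⬝ᵥ v) := by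
    rw [hAw, dotProduct_smul, smul_eq_mul]
  -- the cross terms vanish, leaving only the part of `A` on the orthogonal complements
  have hsplit : u ⬝ᵥ A *ᵥ z = σ₁ * d * e + r ⬝ᵥ A *ᵥ ρ := by
    have hz' : z = e • w + ρ := by simp [ρ]
    have hu' : u = d • v + r := by simp [r]
    calc u ⬝ᵥ A *ᵥ z = e * (u ⬝ᵥ A *ᵥ w) + u ⬝ᵥ A *ᵥ ρ := by
          conv_lhs => rw [hz']
          rw [mulVec_add, mulVec_smul, dotProduct_add, dotProduct_smul, smul_eq_mul]
      _ = e * (σ₁ * d) + (d • v + r) ⬝ᵥ A *ᵥ ρ := by rw [hAv, ← hu']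
      _ = σ₁ * d * e + (d * (v ⬝ᵥ A *ᵥ ρ) + r ⬝ᵥ A *ᵥ ρ) := by
          rw [add_dotProduct, smul_dotProduct, smul_eq_mul]
          ring
      _ = σ₁ * d * e + r ⬝ᵥ A *ᵥ ρ := by
          rw [hvA, dotProduct_comm, hρw, mul_zero, mul_zero, zero_add]
  have hr : l2norm r ^ 2 = 1 - d ^ 2 := l2norm_sub_smul_sq hu hv
  have hρ : l2norm ρ ^ 2 = 1 - e ^ 2 := l2norm_sub_smul_sq hz hw
  have hd := abs_le.mp (abs_dotProduct_le_one hu hv)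
  have he := abs_le.mp (abs_dotProduct_le_one hz hw)
  have hrρ : l2norm r * l2norm ρ ≤ 1 - d * e := by
    refine (pow_le_pow_iff_left₀ (mul_nonneg (l2norm_nonneg r) (l2norm_nonneg ρ))
      (by nlinarith) two_ne_zero).mp ?_
    rw [mul_pow, hr, hρ]
    nlinarith [sq_nonneg (d - e)]
  have hrest : r ⬝ᵥ A *ᵥ ρ ≤ σ₂ * (1 - d * e) := calc
    r ⬝ᵥ A *ᵥ ρ ≤ l2norm r * l2norm (A *ᵥ ρ) := (le_abs_self _).trans (abs_dotProduct_le _ _)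
    _ ≤ l2norm r * (σ₂ * l2norm ρ) := mul_le_mul_of_nonneg_left (hA₂ ρ hρw) (l2norm_nonneg r)
    _ ≤ σ₂ * (1 - d * e) := by rw [mul_left_comm]; gcongr
  rw [frobInner_sub_right, frobInner_vecMulVec, frobInner_vecMulVec, hsplit, hAv, ← l2norm_sq, hv,
    frobNorm_vecMulVec_sub_sq hv hw hu hz, dotProduct_comm v u, dotProduct_comm w z]
  nlinarith

theorem sin_angle_le_frobNorm_vecMulVec_sub {x u : Fin p → ℝ} {y z : Fin n → ℝ}
    (hx : l2norm x = 1) (hy : l2norm y = 1) (hu : l2norm u = 1) (hz : l2norm z = 1) :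
    Real.sin (angle x u) ≤ frobNorm (vecMulVec u z - vecMulVec x y) := by
  have hd := abs_dotProduct_le_one hx hu
  have hde : (u ⬝ᵥ x) * (z ⬝ᵥ y) ≤ |x ⬝ᵥ u| := by
    rw [dotProduct_comm u x, dotProduct_comm z y]
    calc (x ⬝ᵥ u) * (y ⬝ᵥ z) ≤ |(x ⬝ᵥ u) * (y ⬝ᵥ z)| := le_abs_self _
      _ = |x ⬝ᵥ u| * |y ⬝ᵥ z| := abs_mul _ _
      _ ≤ |x ⬝ᵥ u| := mul_le_of_le_one_right (abs_nonneg _) (abs_dotProduct_le_one hy hz)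
  rw [angle, hx, hu, mul_one, div_one, Real.sin_arccos, sq_abs, dotp_eq_dotProduct,
    ← Real.sqrt_sq (frobNorm_nonneg (vecMulVec u z - vecMulVec x y)),
    frobNorm_vecMulVec_sub_sq hu hz hx hy]
  refine Real.sqrt_le_sqrt ?_
  nlinarith [sq_nonneg (1 - |x ⬝ᵥ u|), sq_abs (x ⬝ᵥ u)]

end Curvature

theorem frobInner_vecMulVec_sub_le_of_objective_le {p n k : ℕ} {T A : Matrix (Fin p) (Fin n) ℝ}
    {lam : ℝ} (hlam : 0 ≤ lam) (hTA : ∀ j t, |T j t - A j t| ≤ lam / √n)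
    {v vhat : Fin p → ℝ} {w what : Fin n → ℝ} (hk : suppCard v ≤ k)
    (hw : l2norm w = 1) (hwhat : l2norm what = 1)
    (hopt : objective T lam v w ≤ objective T lam vhat what) :
    frobInner A (vecMulVec v w - vecMulVec vhat what)
      ≤ 2 * lam * √k * frobNorm (vecMulVec v w - vecMulVec vhat what) := by
  have hl1 {x : Fin p → ℝ} {y : Fin n → ℝ} (hy : l2norm y = 1) :
      l1norm x = ∑ j, l2norm (vecMulVec x y j) := by
    rw [sum_l2norm_vecMulVec, hy, mul_one]
  rw [objective_eq, objective_eq, hl1 hw, hl1 hwhat] at hopt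
  set X := vecMulVec v w
  set Y := vecMulVec vhat what
  set S := Finset.univ.filter fun j => v j ≠ 0
  have hX : ∀ j ∉ S, X j = 0 := fun j hj => by
    simp only [X, vecMulVec_row, of_not_not (by simpa [S] using hj), zero_smul]
  have hTY : frobInner T (X - Y) ≤ lam * (∑ j, l2norm (X j) - ∑ j, l2norm (Y j)) := by
    rw [frobInner_sub_right]
    linarith
  have hnoise := abs_frobInner_le_of_abs_le hlam (G := T - A) hTA (X - Y)
  have hrows := sum_l2norm_sub_add_sub_le hX Y
  have hsparse : √S.card ≤ √k := Real.sqrt_le_sqrt (Nat.cast_le.mpr hk)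
  calc frobInner A (X - Y) = frobInner T (X - Y) - frobInner (T - A) (X - Y) := by
        rw [frobInner_sub_left]; ring
    _ ≤ lam * (∑ j, l2norm ((X - Y) j) + ∑ j, l2norm (X j) - ∑ j, l2norm (Y j)) := by
        linarith [neg_abs_le (frobInner (T - A) (X - Y))]
    _ ≤ lam * (2 * (√S.card * frobNorm (X - Y))) := by
        gcongr
        exact hrows.trans (by gcongr; exact sum_l2norm_le_sqrt_card_mul_frobNorm S (X - Y))
    _ ≤ 2 * lam * √k * frobNorm (X - Y) := by
        rw [show lam * (2 * (√S.card * frobNorm (X - Y))) = 2 * lam * √S.card * frobNorm (X - Y) by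
          ring]
        gcongr
        exact frobNorm_nonneg _

theorem statement_10_general (p n k : ℕ) (T A : Fin p → Fin n → ℝ) (lam : ℝ) (hlam : 0 ≤ lam)
    (hTA : ∀ j t, |T j t - A j t| ≤ lam / Real.sqrt (n : ℝ))
    (v : Fin p → ℝ) (w : Fin n → ℝ) (hv : l2norm v = 1) (hw : l2norm w = 1)
    (hk : suppCard v ≤ k)
    (σ₁ σ₂ : ℝ)
    -- v and w are leading left and right singular vectors: Aw = σ₁v and Aᵀv = σ₁w
    (hAw : ∀ j, mulVecF A w j = σ₁ * v j)
    (hAtv : ∀ t, (∑ j, A j t * v j) = σ₁ * w t)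
    -- σ₂ is the second singular value of A
    (hσ₂ : σ₂ = sSup {x | ∃ u : Fin n → ℝ, l2norm u ≤ 1 ∧ dotp u w = 0 ∧
        x = l2norm (mulVecF A u)})
    (δ : ℝ) (hδ : δ = σ₁ - σ₂) (hδpos : 0 < δ)
    (vhat : Fin p → ℝ) (what : Fin n → ℝ)
    (hvhat : l2norm vhat = 1) (hwhat : l2norm what = 1)
    (hmax : ∀ (v' : Fin p → ℝ) (w' : Fin n → ℝ), l2norm v' = 1 → l2norm w' = 1 →
      objective T lam v' w' ≤ objective T lam vhat what) :
    Real.sin (angle vhat v) ≤ 4 * lam * Real.sqrt (k : ℝ) / δ := by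
  replace hσ₂ : σ₂ = opNormOnOrthogonal A w := hσ₂
  have hcurv := sub_div_two_mul_frobNorm_sq_le_frobInner (funext hAw) (funext hAtv)
    (hσ₂ ▸ opNormOnOrthogonal_nonneg A w)
    (fun _ hρ => hσ₂ ▸ l2norm_mulVec_le_opNormOnOrthogonal A hρ) hv hw hvhat hwhat
  have hbasic := frobInner_vecMulVec_sub_le_of_objective_le hlam hTA hk hw hwhat (hmax v w hv hw)
  rw [← hδ] at hcurv
  set F := frobNorm (vecMulVec v w - vecMulVec vhat what)
  have hF : F ≤ 4 * lam * √k / δ := by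
    rw [le_div_iff₀ hδpos]
    rcases (show 0 ≤ F from frobNorm_nonneg _).eq_or_lt with hF0 | hFpos
    · rw [← hF0, zero_mul]; positivity
    · nlinarith
  exact (sin_angle_le_frobNorm_vecMulVec_sub hvhat hwhat hv hw).trans hF

/-- Lemma 2 (curvature / sin-angle bound for the penalised maximiser). -/
theorem statement_10 (p n k : ℕ) (T A : Fin p → Fin n → ℝ) (lam : ℝ) (hlam : 0 ≤ lam)
    (hTA : ∀ j t, |T j t - A j t| ≤ lam / Real.sqrt (n : ℝ))
    (v : Fin p → ℝ) (w : Fin n → ℝ) (hv : l2norm v = 1) (hw : l2norm w = 1)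
    (hk : suppCard v ≤ k)
    (σ₁ σ₂ : ℝ)
    -- σ₁ is the largest singular value of A
    (hσ₁ : σ₁ = sSup {x | ∃ u : Fin n → ℝ, l2norm u ≤ 1 ∧ x = l2norm (mulVecF A u)})
    -- v and w are leading left and right singular vectors: Aw = σ₁v and Aᵀv = σ₁w
    (hAw : ∀ j, mulVecF A w j = σ₁ * v j)
    (hAtv : ∀ t, (∑ j, A j t * v j) = σ₁ * w t)
    -- σ₂ is the second singular value of A
    (hσ₂ : σ₂ = sSup {x | ∃ u : Fin n → ℝ, l2norm u ≤ 1 ∧ dotp u w = 0 ∧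
        x = l2norm (mulVecF A u)})
    (δ : ℝ) (hδ : δ = σ₁ - σ₂) (hδpos : 0 < δ)
    (vhat : Fin p → ℝ) (what : Fin n → ℝ)
    (hvhat : l2norm vhat = 1) (hwhat : l2norm what = 1)
    (hmax : ∀ (v' : Fin p → ℝ) (w' : Fin n → ℝ), l2norm v' = 1 → l2norm w' = 1 →
      objective T lam v' w' ≤ objective T lam vhat what) :
    Real.sin (angle vhat v) ≤ 4 * lam * Real.sqrt (k : ℝ) / δ :=
  statement_10_general p n k T A lam hlam hTA v w hv hw hk σ₁ σ₂ hAw hAtv hσ₂ δ hδ hδpos vhat what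
    hvhat hwhat hmax

end MissInspect
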